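/- Let λ, μ, η ∈ ℂ and let u ∈ ℂⁿ, v ∈ ℂ^{2n}, w ∈ ℂ² satisfy the linear three-parameter eigenvalue problem (ηL₂ + λL₁ + L₀ + μM)u = 0, (ηL̃₂ + λL̃₁ + L̃₀ + μM̃)v = 0, and (ηC₂ + λC₁ + C₀)w = 0. Then the vector z = u⊗v⊗w ∈ ℂ^{4n²} satisfies Δ₁ z = λΔ₀ z. -/

import Mathlib

/-!
Cramer's rule, coordinatewise. At the coordinate `((i, j), k)` of `z = u ⊗ v ⊗ w`, the entry of
`Δ₀ z` is the determinant of the 3 × 3 matrix `coeffMatrix` whose `r`-th row holds the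
coefficients of `η, λ, μ` in the `r`-th equation, applied to the `r`-th factor of `z` and read at
its coordinate; the entry of `Δ₁ z` is the same determinant with the `λ`-column replaced by minus
the parameter-free terms `constCol`. The three equations say that this column is
`coeffMatrix *ᵥ (η, λ, μ)`, so Cramer's rule gives `Δ₁ z = λ Δ₀ z`.
-/

open Matrix
open scoped Kronecker

namespace ZGV7

variable {n : ℕ}

def vecKron {m p : Type*} (u : m → ℂ) (v : p → ℂ) : m × p → ℂ :=
  fun x => u x.1 * v x.2

def Lt2 (L2 : Matrix (Fin n) (Fin n) ℂ) : Matrix (Fin n ⊕ Fin n) (Fin n ⊕ Fin n) ℂ :=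
  Matrix.fromBlocks L2 0 0 L2

def Lt1 (L2 L1 : Matrix (Fin n) (Fin n) ℂ) : Matrix (Fin n ⊕ Fin n) (Fin n ⊕ Fin n) ℂ :=
  Matrix.fromBlocks L1 0 ((2 : ℂ) • L2) L1

def Lt0 (L1 L0 : Matrix (Fin n) (Fin n) ℂ) : Matrix (Fin n ⊕ Fin n) (Fin n ⊕ Fin n) ℂ :=
  Matrix.fromBlocks L0 0 L1 L0

def Mt (M : Matrix (Fin n) (Fin n) ℂ) : Matrix (Fin n ⊕ Fin n) (Fin n ⊕ Fin n) ℂ :=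
  Matrix.fromBlocks M 0 0 M

def C2 : Matrix (Fin 2) (Fin 2) ℂ := !![1, 0; 0, 0]
def C1 : Matrix (Fin 2) (Fin 2) ℂ := !![0, -1; -1, 0]
def C0 : Matrix (Fin 2) (Fin 2) ℂ := !![0, 0; 0, 1]

def Δ0 (L2 L1 L0 M : Matrix (Fin n) (Fin n) ℂ) :
    Matrix ((Fin n × (Fin n ⊕ Fin n)) × Fin 2) ((Fin n × (Fin n ⊕ Fin n)) × Fin 2) ℂ :=
  L1 ⊗ₖ Mt M ⊗ₖ C2 + M ⊗ₖ Lt2 L2 ⊗ₖ C1 - M ⊗ₖ Lt1 L2 L1 ⊗ₖ C2 - L2 ⊗ₖ Mt M ⊗ₖ C1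

def Δ1 (L2 L1 L0 M : Matrix (Fin n) (Fin n) ℂ) :
    Matrix ((Fin n × (Fin n ⊕ Fin n)) × Fin 2) ((Fin n × (Fin n ⊕ Fin n)) × Fin 2) ℂ :=
  L2 ⊗ₖ Mt M ⊗ₖ C0 - L0 ⊗ₖ Mt M ⊗ₖ C2 - M ⊗ₖ Lt2 L2 ⊗ₖ C0 + M ⊗ₖ Lt0 L1 L0 ⊗ₖ C2

theorem _root_.Matrix.det_updateCol_mulVec {m R : Type*} [Fintype m] [DecidableEq m] [CommRing R]
    (A : Matrix m m R) (x : m → R) (j : m) :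
    (A.updateCol j (A *ᵥ x)).det = A.det * x j := by
  rw [← cramer_apply, cramer_eq_adjugate_mulVec, mulVec_mulVec, adjugate_mul, smul_mulVec,
    one_mulVec, Pi.smul_apply, smul_eq_mul]

theorem kroneckerMap_mulVec_vecKron {m m' p p' : Type*} [Fintype m'] [Fintype p']
    (A : Matrix m m' ℂ) (B : Matrix p p' ℂ) (x : m' → ℂ) (y : p' → ℂ) :
    (A ⊗ₖ B) *ᵥ vecKron x y = vecKron (A *ᵥ x) (B *ᵥ y) := by
  ext ⟨i, j⟩
  simp only [mulVec, dotProduct, vecKron, kroneckerMap_apply, Fintype.sum_prod_type,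
    Finset.sum_mul_sum]
  exact Finset.sum_congr rfl fun _ _ => Finset.sum_congr rfl fun _ _ => by ring

section

variable (L2 L1 L0 M : Matrix (Fin n) (Fin n) ℂ) (u : Fin n → ℂ) (v : Fin n ⊕ Fin n → ℂ)
  (w : Fin 2 → ℂ) (i : Fin n) (j : Fin n ⊕ Fin n) (k : Fin 2)

def coeffMatrix : Matrix (Fin 3) (Fin 3) ℂ :=
  !![(L2 *ᵥ u) i, (L1 *ᵥ u) i, (M *ᵥ u) i;
     (Lt2 L2 *ᵥ v) j, (Lt1 L2 L1 *ᵥ v) j, (Mt M *ᵥ v) j;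
     (C2 *ᵥ w) k, (C1 *ᵥ w) k, 0]

def constCol : Fin 3 → ℂ :=
  ![(L0 *ᵥ u) i, (Lt0 L1 L0 *ᵥ v) j, (C0 *ᵥ w) k]

theorem Δ0_mulVec_vecKron_apply :
    (Δ0 L2 L1 L0 M *ᵥ vecKron (vecKron u v) w) ((i, j), k) =
      (coeffMatrix L2 L1 M u v w i j k).det := by
  simp only [Δ0, coeffMatrix, add_mulVec, sub_mulVec, kroneckerMap_mulVec_vecKron, det_fin_three]
  simp only [Pi.add_apply, Pi.sub_apply, vecKron, of_apply, cons_val', cons_val_zero,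
    cons_val_one, cons_val_fin_one, cons_val]
  ring

theorem Δ1_mulVec_vecKron_apply :
    (Δ1 L2 L1 L0 M *ᵥ vecKron (vecKron u v) w) ((i, j), k) =
      ((coeffMatrix L2 L1 M u v w i j k).updateCol 1 (-constCol L1 L0 u v w i j k)).det := by
  simp only [Δ1, coeffMatrix, constCol, add_mulVec, sub_mulVec, kroneckerMap_mulVec_vecKron,
    det_fin_three]
  simp only [Pi.add_apply, Pi.sub_apply, vecKron, of_apply, cons_val', cons_val_zero,
    cons_val_one, cons_val_fin_one, cons_val, updateCol_apply, Pi.neg_apply, Fin.isValue,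
    Fin.reduceEq, ↓reduceIte]
  ring

theorem coeffMatrix_mulVec_eq_neg_constCol {lam mu eta : ℂ}
    (h1 : (eta • L2 + lam • L1 + L0 + mu • M) *ᵥ u = 0)
    (h2 : (eta • Lt2 L2 + lam • Lt1 L2 L1 + Lt0 L1 L0 + mu • Mt M) *ᵥ v = 0)
    (h3 : (eta • C2 + lam • C1 + C0) *ᵥ w = 0) :
    coeffMatrix L2 L1 M u v w i j k *ᵥ ![eta, lam, mu] = -constCol L1 L0 u v w i j k := by
  have e1 := congrFun h1 i
  have e2 := congrFun h2 j
  have e3 := congrFun h3 k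
  simp only [add_mulVec, smul_mulVec, Pi.add_apply, Pi.smul_apply, smul_eq_mul,
    Pi.zero_apply] at e1 e2 e3
  ext r
  fin_cases r <;>
    simp only [coeffMatrix, constCol, Fin.zero_eta, Fin.mk_one, Fin.reduceFinMk, Fin.isValue,
      mulVec_cons, mulVec_empty, add_zero, Pi.add_apply, Pi.smul_apply, Pi.neg_apply,
      Function.comp_apply, cons_val, cons_val_zero, cons_val_one, head_cons, tail_cons, smul_eq_mul,
      mul_zero]
  · linear_combination e1
  · linear_combination e2
  · linear_combination e3

end

theorem decoupled_GEP_of_three_parameter_EVP_general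
    (n : ℕ) (L2 L1 L0 M : Matrix (Fin n) (Fin n) ℂ)
    (lam mu eta : ℂ) (u : Fin n → ℂ) (v : Fin n ⊕ Fin n → ℂ) (w : Fin 2 → ℂ)
    (h1 : (eta • L2 + lam • L1 + L0 + mu • M) *ᵥ u = 0)
    (h2 : (eta • Lt2 L2 + lam • Lt1 L2 L1 + Lt0 L1 L0 + mu • Mt M) *ᵥ v = 0)
    (h3 : (eta • C2 + lam • C1 + C0) *ᵥ w = 0) :
    Δ1 L2 L1 L0 M *ᵥ vecKron (vecKron u v) w
      = lam • (Δ0 L2 L1 L0 M *ᵥ vecKron (vecKron u v) w) := by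
  ext ⟨⟨i, j⟩, k⟩
  rw [Δ1_mulVec_vecKron_apply, Pi.smul_apply, Δ0_mulVec_vecKron_apply,
    ← coeffMatrix_mulVec_eq_neg_constCol L2 L1 L0 M u v w i j k h1 h2 h3,
    Matrix.det_updateCol_mulVec, cons_val_one, cons_val_zero, smul_eq_mul, mul_comm]

/-- If `(λ, μ, η)` with vectors `u, v, w` solves the linear three-parameter
eigenvalue problem, then `z = u⊗v⊗w` satisfies `Δ₁ z = λ Δ₀ z`. -/
theorem decoupled_GEP_of_three_parameter_EVP
    (n : ℕ) (hn : 1 ≤ n) (L2 L1 L0 M : Matrix (Fin n) (Fin n) ℂ)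
    (lam mu eta : ℂ) (u : Fin n → ℂ) (v : Fin n ⊕ Fin n → ℂ) (w : Fin 2 → ℂ)
    (h1 : (eta • L2 + lam • L1 + L0 + mu • M) *ᵥ u = 0)
    (h2 : (eta • Lt2 L2 + lam • Lt1 L2 L1 + Lt0 L1 L0 + mu • Mt M) *ᵥ v = 0)
    (h3 : (eta • C2 + lam • C1 + C0) *ᵥ w = 0) :
    Δ1 L2 L1 L0 M *ᵥ vecKron (vecKron u v) w
      = lam • (Δ0 L2 L1 L0 M *ᵥ vecKron (vecKron u v) w) :=
  decoupled_GEP_of_three_parameter_EVP_general n L2 L1 L0 M lam mu eta u v w h1 h2 h3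

end ZGV7
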